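/- The S-radical of I = (f₁,…,f_s) with inequality constraints g₁,…,g_r equals the contraction to ℝ[x] of the real radical of the extended ideal I_S = (f₁,…,f_s, g₁ − s₁², …, g_r − s_r²) in ℝ[x, s₁,…,s_r], i.e. √[S]{I} = √[ℝ]{I_S} ∩ ℝ[x]. -/

import Mathlib

/-!
Modulo the relations `sⱼ² = gⱼ`, every polynomial in `ℝ[x, s]` has a unique normal form
`∑_α c_α s^α` over the square-free monomials `s^α`, `α ∈ {0,1}^r`, and the constant
coordinate `c_0` is an `ℝ[x]`-linear retraction onto `ℝ[x]` that maps the extended ideal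
into `I`. Since `(s^α)² ≡ g^α`, the constant coordinate of a square `(∑ c_α s^α)²` is
`∑ c_α² g^α`, so a certificate `p^{2m} + ∑ q_k² ∈ I_S` contracts to a certificate
`p^{2m} + ∑ σ_α g^α ∈ I`; conversely such a certificate lifts to
`p^{2m} + ∑ σ_α (s^α)² ∈ I_S`.
-/

open MvPolynomial

/-- The real radical of an ideal, here in `ℝ[x₁,…,xₙ,s₁,…,s_r]`. -/
def realRadical {n r : ℕ} (I : Ideal (MvPolynomial (Fin n ⊕ Fin r) ℝ)) :
    Set (MvPolynomial (Fin n ⊕ Fin r) ℝ) :=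
  {p | ∃ (m : ℕ) (s : MvPolynomial (Fin n ⊕ Fin r) ℝ), IsSumSq s ∧ p ^ (2 * m) + s ∈ I}

theorem IsSumSq.map {R S F : Type*} [Semiring R] [Semiring S] [FunLike F R S]
    [RingHomClass F R S] (φ : F) {a : R} (ha : IsSumSq a) : IsSumSq (φ a) := by
  induction ha with
  | zero => simp
  | sq_add x _ ih => simpa using ih.sq_add (φ x)

theorem exists_isSumSq_pow_add_mem_map_iff {R S : Type*} [Semiring R] [Semiring S]
    (e : R ≃+* S) (I : Ideal R) (x : R) :
    (∃ (m : ℕ) (t : R), IsSumSq t ∧ x ^ (2 * m) + t ∈ I) ↔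
      ∃ (m : ℕ) (t : S), IsSumSq t ∧ e x ^ (2 * m) + t ∈ I.map e := by
  simp only [Ideal.mem_map_of_equiv]
  constructor
  · rintro ⟨m, t, ht, hmem⟩
    exact ⟨m, e t, ht.map e, _, hmem, by simp⟩
  · rintro ⟨m, t, ht, y, hy, hye⟩
    have hy' : y = x ^ (2 * m) + e.symm t := e.injective (by simp [hye])
    exact ⟨m, e.symm t, ht.map e.symm, hy' ▸ hy⟩

namespace Slack

section CommSemiring

variable {A σ : Type*} [CommSemiring A] [Fintype σ]

/-- The coordinate of `sᵏ` on the basis vector `s ^ a.toNat` of `A[s] ⧸ (s² - c)`. -/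
def powCoord (c : A) (a : Bool) (k : ℕ) : A :=
  if k % 2 = a.toNat then c ^ (k / 2) else 0

def monomialCoord (g : σ → A) (α : σ → Bool) (β : σ →₀ ℕ) : A :=
  ∏ j, powCoord (g j) (α j) (β j)

/-- The coordinate on `s^α` of the normal form modulo the relations `sⱼ² = gⱼ`: the
quotient `A[s] ⧸ (sⱼ² - gⱼ)` is a free `A`-module on the square-free monomials `s^α`. -/
noncomputable def coord (g : σ → A) (α : σ → Bool) : MvPolynomial σ A →ₗ[A] A :=
  (basisMonomials σ A).constr A (monomialCoord g α)

def gPow (g : σ → A) (α : σ → Bool) : A :=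
  ∏ j, if α j then g j else 1

theorem powCoord_add (c : A) (k l : ℕ) :
    powCoord c false (k + l) =
      ∑ a : Bool, powCoord c a k * powCoord c a l * if a then c else 1 := by
  rcases Nat.mod_two_eq_zero_or_one k with hk | hk <;>
    rcases Nat.mod_two_eq_zero_or_one l with hl | hl <;>
    simp [powCoord, hk, hl, Nat.add_mod, ← pow_add, ← pow_succ] <;> congr 1 <;> omega

theorem powCoord_add_two (c : A) (a : Bool) (k : ℕ) :
    powCoord c a (k + 2) = c * powCoord c a k := by
  unfold powCoord
  rw [Nat.add_mod_right, Nat.add_div_right _ two_pos, pow_succ']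
  split_ifs <;> simp

theorem coord_monomial (g : σ → A) (α : σ → Bool) (β : σ →₀ ℕ) (c : A) :
    coord g α (monomial β c) = c * monomialCoord g α β := by
  have := (basisMonomials σ A).constr_basis A (monomialCoord g α) β
  rw [coe_basisMonomials] at this
  rw [coord, ← smul_eq_mul, ← this, ← map_smul, smul_monomial, smul_eq_mul, mul_one]

theorem coord_C (g : σ → A) (c : A) : coord g (fun _ => false) (C c) = c := by
  simp [← monomial_zero', coord_monomial, monomialCoord, powCoord]

theorem coord_C_mul (g : σ → A) (α : σ → Bool) (c : A) (P : MvPolynomial σ A) :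
    coord g α (C c * P) = c * coord g α P := by
  rw [← smul_eq_C_mul, map_smul, smul_eq_mul]

theorem coord_X_sq_mul (g : σ → A) (α : σ → Bool) (j : σ) (P : MvPolynomial σ A) :
    coord g α (X j ^ 2 * P) = g j * coord g α P := by
  classical
  induction P using MvPolynomial.induction_on' with
  | monomial β c =>
    have hfactor : ∀ i, powCoord (g i) (α i) ((Finsupp.single j 2 + β : σ →₀ ℕ) i) =
        (if i = j then g j else 1) * powCoord (g i) (α i) (β i) := by
      intro i
      rcases eq_or_ne i j with rfl | hij
      · rw [Finsupp.add_apply, Finsupp.single_eq_same, add_comm, powCoord_add_two, if_pos rfl]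
      · rw [Finsupp.add_apply, Finsupp.single_eq_of_ne hij, zero_add, if_neg hij, one_mul]
    rw [X_pow_eq_monomial, monomial_mul, coord_monomial, coord_monomial, one_mul,
      monomialCoord, monomialCoord, Finset.prod_congr rfl fun i _ => hfactor i,
      Finset.prod_mul_distrib, Finset.prod_ite_eq' Finset.univ, if_pos (Finset.mem_univ j)]
    ring
  | add P Q hP hQ => rw [mul_add, map_add, map_add, hP, hQ, mul_add]

/-- In the basis `s^α`, `s^α s^β = g^(α ∧ β) s^(α xor β)`, so the constant coordinate of a
product pairs equal coordinates, weighted by `g^α`. -/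
theorem coord_mul [DecidableEq σ] (g : σ → A) (P Q : MvPolynomial σ A) :
    coord g (fun _ => false) (P * Q) = ∑ α, coord g α P * coord g α Q * gPow g α := by
  induction P using MvPolynomial.induction_on' generalizing Q with
  | add P₁ P₂ h₁ h₂ => simp only [add_mul, map_add, h₁, h₂, Finset.sum_add_distrib]
  | monomial β c =>
    induction Q using MvPolynomial.induction_on' with
    | add Q₁ Q₂ h₁ h₂ =>
      simp only [mul_add, add_mul, map_add, h₁, h₂, Finset.sum_add_distrib]
    | monomial β' c' =>
      simp only [monomial_mul, coord_monomial, monomialCoord, gPow, Finsupp.add_apply,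
        powCoord_add, Fintype.prod_sum, Finset.mul_sum, Finset.prod_mul_distrib]
      exact Finset.sum_congr rfl fun α _ => by ring

theorem exists_coord_eq_sum_isSumSq_mul_gPow [DecidableEq σ] (g : σ → A)
    {t : MvPolynomial σ A} (ht : IsSumSq t) :
    ∃ sos : (σ → Bool) → A, (∀ α, IsSumSq (sos α)) ∧
      coord g (fun _ => false) t = ∑ α, sos α * gPow g α := by
  induction ht with
  | zero => exact ⟨fun _ => 0, fun _ => IsSumSq.zero, by simp⟩
  | sq_add P _ ih =>
    obtain ⟨sos, hsos, heq⟩ := ih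
    refine ⟨fun α => coord g α P * coord g α P + sos α, fun α => (hsos α).sq_add _, ?_⟩
    rw [map_add, heq, coord_mul, ← Finset.sum_add_distrib]
    exact Finset.sum_congr rfl fun α _ => by ring

end CommSemiring

section CommRing

variable {A σ : Type*} [CommRing A] [Fintype σ]

noncomputable def ideal (g : σ → A) : Ideal (MvPolynomial σ A) :=
  Ideal.span (Set.range fun j => C (g j) - X j ^ 2)

theorem coord_mem_of_mem_map_C_sup_ideal (I : Ideal A) (g : σ → A) (α : σ → Bool)
    {P : MvPolynomial σ A} (hP : P ∈ I.map C ⊔ ideal g) : coord g α P ∈ I := by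
  obtain ⟨P₁, hP₁, P₂, hP₂, rfl⟩ := Submodule.mem_sup.mp hP
  obtain ⟨c, rfl⟩ := Ideal.mem_span_range_iff_exists_fun.mp hP₂
  have hrel : coord g α (∑ j, c j * (C (g j) - X j ^ 2)) = 0 := by
    simp only [map_sum, mul_comm (c _), sub_mul, map_sub, coord_C_mul, coord_X_sq_mul,
      sub_self, Finset.sum_const_zero]
  rw [map_add, hrel, add_zero, as_sum P₁, map_sum]
  refine Ideal.sum_mem _ fun β _ => ?_
  rw [coord_monomial]
  exact Ideal.mul_mem_right _ _ (mem_map_C_iff.mp hP₁ β)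

theorem C_gPow_sub_sq_mem_ideal (g : σ → A) (α : σ → Bool) :
    C (gPow g α) - (∏ j, if α j then X j else 1) ^ 2 ∈ ideal g := by
  rw [← Ideal.Quotient.mk_eq_mk_iff_sub_mem, gPow, map_prod, map_prod, map_pow, map_prod,
    ← Finset.prod_pow]
  refine Finset.prod_congr rfl fun j _ => ?_
  split_ifs
  · rw [← map_pow, Ideal.Quotient.mk_eq_mk_iff_sub_mem]
    exact Ideal.subset_span ⟨j, rfl⟩
  · simp

end CommRing

section Equiv

variable {K ι σ : Type*}

noncomputable def equiv [CommSemiring K] :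
    MvPolynomial (ι ⊕ σ) K ≃+* MvPolynomial σ (MvPolynomial ι K) :=
  (renameEquiv K (Equiv.sumComm ι σ)).toRingEquiv.trans (sumRingEquiv K σ ι)

theorem equiv_rename_inl [CommSemiring K] (q : MvPolynomial ι K) :
    equiv (rename Sum.inl q : MvPolynomial (ι ⊕ σ) K) = C q := by
  have : (equiv.toRingHom.comp (rename Sum.inl).toRingHom :
      MvPolynomial ι K →+* MvPolynomial σ (MvPolynomial ι K)) = C :=
    ringHom_ext (by simp [equiv, sumRingEquiv_C]) (by simp [equiv, sumRingEquiv_X_inr])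
  exact RingHom.congr_fun this q

theorem equiv_X_inr [CommSemiring K] (j : σ) :
    equiv (X (Sum.inr j) : MvPolynomial (ι ⊕ σ) K) = X j := by
  simp [equiv, sumRingEquiv_X_inl]

theorem map_equiv_span_extended [CommRing K] {κ : Type*} (f : κ → MvPolynomial ι K)
    (g : σ → MvPolynomial ι K) :
    (Ideal.span (Set.range (fun i => rename Sum.inl (f i)) ∪
        Set.range (fun j => rename Sum.inl (g j) - X (Sum.inr j) ^ 2))).map equiv =
      (Ideal.span (Set.range f)).map C ⊔ ideal g := by
  rw [Ideal.map_span, Set.image_union, ← Set.range_comp, ← Set.range_comp, Ideal.span_union,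
    Ideal.map_span, ← Set.range_comp, ideal]
  congr 3
  · ext i
    simp [equiv_rename_inl]
  · ext j
    simp [equiv_rename_inl, equiv_X_inr]

end Equiv

end Slack

open Slack

def sRadical {A σ : Type*} [CommSemiring A] [Fintype σ] [DecidableEq σ] (I : Ideal A)
    (g : σ → A) : Set A :=
  {p | ∃ (m : ℕ) (sos : (σ → Bool) → A), (∀ α, IsSumSq (sos α)) ∧
    p ^ (2 * m) + ∑ α, sos α * gPow g α ∈ I}

theorem mem_sRadical_iff {A σ : Type*} [CommRing A] [Fintype σ] [DecidableEq σ]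
    (I : Ideal A) (g : σ → A) (p : A) :
    p ∈ sRadical I g ↔
      ∃ (m : ℕ) (t : MvPolynomial σ A),
        IsSumSq t ∧ C p ^ (2 * m) + t ∈ I.map C ⊔ ideal g := by
  constructor
  · rintro ⟨m, sos, hsos, hmem⟩
    set sPow : (σ → Bool) → MvPolynomial σ A := fun α => ∏ j, if α j then X j else 1
    refine ⟨m, ∑ α, C (sos α) * sPow α ^ 2,
      IsSumSq.sum fun α _ => ((hsos α).map C).mul (sq (sPow α) ▸ IsSumSq.mul_self _), ?_⟩
    have hsplit : C p ^ (2 * m) + ∑ α, C (sos α) * sPow α ^ 2 =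
        C (p ^ (2 * m) + ∑ α, sos α * gPow g α) -
          ∑ α, C (sos α) * (C (gPow g α) - sPow α ^ 2) := by
      simp only [map_add, map_pow, map_sum, map_mul, mul_sub, Finset.sum_sub_distrib]
      ring
    rw [hsplit]
    exact sub_mem (Ideal.mem_sup_left (Ideal.mem_map_of_mem C hmem))
      (Ideal.mem_sup_right (Ideal.sum_mem _ fun α _ =>
        Ideal.mul_mem_left _ _ (C_gPow_sub_sq_mem_ideal g α)))
  · rintro ⟨m, t, ht, hmem⟩
    obtain ⟨sos, hsos, heq⟩ := exists_coord_eq_sum_isSumSq_mul_gPow g ht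
    refine ⟨m, sos, hsos, ?_⟩
    have := coord_mem_of_mem_map_C_sup_ideal I g (fun _ => false) hmem
    rwa [map_add, ← map_pow, coord_C, heq] at this

/-- The `S`-radical of `I = (f₁,…,f_s)` with inequality constraints `g₁,…,g_r` equals the
contraction to `ℝ[x]` of the real radical of the extended ideal
`I_S = (f₁,…,f_s, g₁ − s₁², …, g_r − s_r²)` in `ℝ[x,s₁,…,s_r]`. -/
theorem sRadical_eq_realRadical_extended {n s r : ℕ}
    (f : Fin s → MvPolynomial (Fin n) ℝ) (g : Fin r → MvPolynomial (Fin n) ℝ) :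
    {p : MvPolynomial (Fin n) ℝ |
        ∃ (m : ℕ) (sos : (Fin r → Bool) → MvPolynomial (Fin n) ℝ),
          (∀ α, IsSumSq (sos α)) ∧
            p ^ (2 * m) +
              ∑ α : Fin r → Bool, sos α * ∏ j : Fin r, (if α j then g j else 1) ∈
              Ideal.span (Set.range f)} =
      {p : MvPolynomial (Fin n) ℝ |
        rename Sum.inl p ∈
          realRadical (Ideal.span
            (Set.range (fun i => rename Sum.inl (f i)) ∪
              Set.range (fun j => rename Sum.inl (g j) - (X (Sum.inr j)) ^ 2)))} := by
  ext p
  change p ∈ sRadical (Ideal.span (Set.range f)) g ↔ _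
  rw [mem_sRadical_iff, Set.mem_ofPred_eq, realRadical, Set.mem_ofPred_eq,
    exists_isSumSq_pow_add_mem_map_iff Slack.equiv, map_equiv_span_extended, equiv_rename_inl]
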